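/- Let eip_tm be the elastic inner product on symbolic sequences with g ≡ 1 (i.e. ν = 0) and δ(a,b) = 1 if a = b, 0 otherwise. Then for any two sequences A₁ᵖ, B₁^q over a finite alphabet Σ, eip_tm(A₁ᵖ, B₁^q) = Σ_{w ∈ Σ} TF_A(w) · TF_B(w), where TF_X(w) denotes the number of occurrences of symbol w in sequence X; i.e., eip_tm coincides with the Euclidean inner product of the term-frequency vectors of A and B. -/

import Mathlib

noncomputable section

/-- A discrete time series is represented as a list of (timestamp, value) pairs,
stored in strictly *decreasing* timestamp order (head = last sample).
`IsTS` says timestamps strictly decrease along the list and no spatial value is zero,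
i.e. the list represents an element of `U*` (the empty list being `Ω`). -/
def IsTS {S : Type*} [Zero S] (l : List (ℝ × S)) : Prop :=
  l.Chain' (fun x y => y.1 < x.1) ∧ ∀ p ∈ l, p.2 ≠ (0 : S)

/-- The recursive elastic product with parameters `α β ξ` and functions `f`, `g`:
`ep(A₁ᵖ,B₁ᵠ) = α·ep(A₁ᵖ⁻¹,B₁ᵠ) + β·ep(A₁ᵖ⁻¹,B₁ᵠ⁻¹) + f(a(p),b(q))·g(t_{a(p)},t_{b(q)}) + α·ep(A₁ᵖ,B₁ᵠ⁻¹)`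
with base case `ep(A,Ω) = ep(Ω,B) = ξ`. -/
def ep {S : Type*} (f : S → S → ℝ) (g : ℝ → ℝ → ℝ) (α β ξ : ℝ) :
    List (ℝ × S) → List (ℝ × S) → ℝ
  | [], _ => ξ
  | _ :: _, [] => ξ
  | (t, a) :: A, (u, b) :: B =>
      α * ep f g α β ξ A ((u, b) :: B) + β * ep f g α β ξ A B
        + f a b * g t u + α * ep f g α β ξ ((t, a) :: A) B
  termination_by A B => A.length + B.length


open Classical in
/-- The timestamp-merging addition `⊕`: merge the two series by timestamps, adding the
spatial values at coinciding timestamps and deleting resulting zero values. -/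
def tsAdd {S : Type*} [AddCommGroup S] :
    List (ℝ × S) → List (ℝ × S) → List (ℝ × S)
  | [], l => l
  | l, [] => l
  | (t, a) :: A, (u, b) :: B =>
      if u < t then (t, a) :: tsAdd A ((u, b) :: B)
      else if t < u then (u, b) :: tsAdd ((t, a) :: A) B
      else if a + b = 0 then tsAdd A B
      else (t, a + b) :: tsAdd A B
  termination_by A B => A.length + B.length


open Classical in
/-- Scalar multiplication `⊗`: scale every spatial value, deleting everything if `λ = 0`. -/
def tsSmul {S : Type*} [AddCommGroup S] [Module ℝ S] (r : ℝ) (l : List (ℝ × S)) :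
    List (ℝ × S) :=
  if r = 0 then [] else l.map fun p => (p.1, r • p.2)

/-- `ip` is an inner product on `(U*, ⊕, ⊗)`: symmetric, bilinear
(linearity in the first argument together with symmetry), and positive definite. -/
structure IsInnerOnTS {S : Type*} [AddCommGroup S] [Module ℝ S]
    (ip : List (ℝ × S) → List (ℝ × S) → ℝ) : Prop where
  symm : ∀ A B, IsTS A → IsTS B → ip A B = ip B A
  add_left : ∀ A B C, IsTS A → IsTS B → IsTS C → ip (tsAdd A B) C = ip A C + ip B C
  smul_left : ∀ (r : ℝ) A B, IsTS A → IsTS B → ip (tsSmul r A) B = r * ip A B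
  nonneg : ∀ A, IsTS A → 0 ≤ ip A A
  definite : ∀ A, IsTS A → (ip A A = 0 ↔ A = [])


/-
With `α = 1`, `β = -1`, `ξ = 0` the recursion of `ep` is inclusion–exclusion on the grid of
index pairs, so `ep` is the plain double sum `∑ᵢ ∑ⱼ f(a i, b j) g(tᵢ, uⱼ)`. For `g ≡ 1` and
`f = δ` this is `∑ᵢ #{j | b j = a i} = ∑_w TF_A(w) TF_B(w)`, grouping the outer sum by symbol.
-/

theorem ep_one_neg_one_zero_eq_sum {S : Type*} (f : S → S → ℝ) (g : ℝ → ℝ → ℝ)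
    (L M : List (ℝ × S)) :
    ep f g 1 (-1) 0 L M = (L.map fun p => (M.map fun q => f p.2 q.2 * g p.1 q.1).sum).sum := by
  induction L, M using ep.induct with
  | case1 M => simp [ep]
  | case2 => simp [ep]
  | case3 t a A u b B ih_left ih_diag ih_right =>
    rw [ep, ih_left, ih_diag, ih_right]
    simp only [List.map_cons, List.sum_cons]
    ring

theorem List.sum_map_eq_sum_count_mul {α R : Type*} [Fintype α] [DecidableEq α]
    [NonAssocSemiring R] (l : List α) (h : α → R) :
    (l.map h).sum = ∑ w : α, (l.count w : R) * h w := by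
  rw [Finset.sum_list_map_count, Finset.sum_subset (Finset.subset_univ _)]
  · simp only [nsmul_eq_mul]
  · intro w _ hw
    rw [List.count_eq_zero_of_not_mem (by simpa using hw), zero_smul]

theorem List.sum_map_boole_eq_count {α R : Type*} [Fintype α] [DecidableEq α]
    [NonAssocSemiring R] (l : List α) (a : α) :
    (l.map fun b => if a = b then (1 : R) else 0).sum = l.count a := by
  rw [List.sum_map_eq_sum_count_mul]
  simp only [mul_boole, Finset.sum_ite_eq, Finset.mem_univ, if_true]

def List.toTimeSeries {S : Type*} (A : List S) : List (ℝ × S) :=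
  (A.zipIdx.map fun p => ((p.2 : ℝ), p.1)).reverse

theorem List.map_snd_toTimeSeries {S : Type*} (A : List S) :
    A.toTimeSeries.map Prod.snd = A.reverse := by
  simp [List.toTimeSeries, List.map_reverse, Function.comp_def]

theorem List.sum_map_snd_toTimeSeries {S R : Type*} [AddCommMonoid R] (A : List S)
    (h : S → R) : (A.toTimeSeries.map fun p => h p.2).sum = (A.map h).sum := by
  rw [← List.sum_reverse (A.map h), ← List.map_reverse, ← A.map_snd_toTimeSeries, List.map_map]
  rfl

/-- with `g ≡ 1` (i.e. `ν = 0`) and `δ(a,b) = 1` if `a = b`, else `0`,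
the elastic inner product of two symbolic sequences over a finite alphabet equals the
Euclidean inner product of their term-frequency vectors:
`eip_tm(A,B) = ∑_{w ∈ Σ} TF_A(w)·TF_B(w)`. Timestamps are the indices of occurrence. -/
theorem eip_tm_eq_term_frequency_inner
    {Sig : Type*} [Fintype Sig] [DecidableEq Sig] (A B : List Sig) :
    ep (fun a b : Sig => if a = b then (1 : ℝ) else 0) (fun _ _ => 1) 1 (-1) 0
      ((A.zipIdx.map fun p => ((p.2 : ℝ), p.1)).reverse)
      ((B.zipIdx.map fun p => ((p.2 : ℝ), p.1)).reverse)
    = ∑ w : Sig, (A.count w : ℝ) * (B.count w : ℝ) := by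
  change ep (fun a b : Sig => if a = b then (1 : ℝ) else 0) (fun _ _ => 1) 1 (-1) 0
    A.toTimeSeries B.toTimeSeries = _
  calc _ = (A.map fun a => (B.map fun b => if a = b then (1 : ℝ) else 0).sum).sum := by
        rw [ep_one_neg_one_zero_eq_sum, ← A.sum_map_snd_toTimeSeries]
        simp only [mul_one, ← B.sum_map_snd_toTimeSeries]
    _ = (A.map fun a => (B.count a : ℝ)).sum := by simp only [List.sum_map_boole_eq_count]
    _ = _ := A.sum_map_eq_sum_count_mul _

end
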